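/- Let H be a unital locally standard measure algebra with st(H) = s. Then Spec(H) = { (a/b)·s : b ∈ Ω(s), 1 ≤ a ≤ b }. In particular, Spec(Stₙ) = {1, 2, …, n}. -/

import Mathlib

open scoped BigOperators

noncomputable section

/-! ### Steinitz numbers -/

/-- A Steinitz number: a formal product `∏ p ^ r_p` over all primes, with exponents
`r_p ∈ ℕ ∪ {∞}`, encoded as the function sending each prime to its exponent. -/
def SteinitzNumber : Type := Nat.Primes → ℕ∞

namespace SteinitzNumber

instance : One SteinitzNumber := ⟨fun _ => 0⟩

instance : Mul SteinitzNumber := ⟨fun s t p => s p + t p⟩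

/-- The Steinitz number associated with a positive integer `n`. -/
def ofNat (n : ℕ) : SteinitzNumber := fun p => (n.factorization p : ℕ∞)

/-- `b ∈ Ω(s)`: the positive integer `b` divides the Steinitz number `s`. -/
def NatDvd (b : ℕ) (s : SteinitzNumber) : Prop :=
  0 < b ∧ ∀ p : Nat.Primes, (b.factorization p : ℕ∞) ≤ s p

/-- The quotient `s / b` of a Steinitz number by a positive integer dividing it. -/
def divNat (s : SteinitzNumber) (b : ℕ) : SteinitzNumber :=
  fun p => s p - (b.factorization p : ℕ∞)

/-- An infinite Steinitz number is one which is not a positive integer. -/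
def Infinite (s : SteinitzNumber) : Prop := ∀ n : ℕ, s ≠ ofNat n

/-- Steinitz numbers `s` and `t` are rationally connected: `t = (a/b)·s` for positive
integers `a, b` (expressed by cross multiplication). -/
def RationallyConnected (s t : SteinitzNumber) : Prop :=
  ∃ a b : ℕ, 0 < a ∧ 0 < b ∧ ofNat b * t = ofNat a * s

/-- `s₁` finitely divides `s₂`: `s₁ = s₂ / b` for some `b ∈ Ω(s₂)`. -/
def FinDvd (s₁ s₂ : SteinitzNumber) : Prop :=
  ∃ b : ℕ, NatDvd b s₂ ∧ ofNat b * s₁ = s₂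

/-- `s₁ ≤ s₂` iff `s₁ = (a/b)·s₂` with `b ∈ Ω(s₂)` and `1 ≤ a ≤ b`. -/
def Le (s₁ s₂ : SteinitzNumber) : Prop :=
  ∃ a b : ℕ, 0 < a ∧ a ≤ b ∧ NatDvd b s₂ ∧ ofNat b * s₁ = ofNat a * s₂

/-- A saturated set of Steinitz numbers. -/
def Saturated (S : Set SteinitzNumber) : Prop :=
  (∀ s₁ ∈ S, ∀ s₂ ∈ S, RationallyConnected s₁ s₂) ∧
  (∀ s₂ ∈ S, ∀ s₁, FinDvd s₁ s₂ → s₁ ∈ S) ∧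
  (∀ s ∈ S, ∀ n : ℕ, ofNat n * s ∈ S → ∀ k : ℕ, 1 ≤ k → k ≤ n → ofNat k * s ∈ S)

/-- `S(∞, s) = { (a/b)·s : a ∈ ℕ, b ∈ Ω(s) }`. -/
def SInf (s : SteinitzNumber) : Set SteinitzNumber :=
  {t | ∃ a b : ℕ, 0 < a ∧ NatDvd b s ∧ ofNat b * t = ofNat a * s}

/-- `S(r, s) = { (a/b)·s : a, b ∈ ℕ, b ∈ Ω(s), a ≤ r·b }`. -/
def SBdd (r : ℝ) (s : SteinitzNumber) : Set SteinitzNumber :=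
  {t | ∃ a b : ℕ, 0 < a ∧ NatDvd b s ∧ (a : ℝ) ≤ r * b ∧ ofNat b * t = ofNat a * s}

/-- `S⁺(r, s) = { (a/b)·s : a, b ∈ ℕ, b ∈ Ω(s), a < r·b }`. -/
def SBddPlus (r : ℝ) (s : SteinitzNumber) : Set SteinitzNumber :=
  {t | ∃ a b : ℕ, 0 < a ∧ NatDvd b s ∧ (a : ℝ) < r * b ∧ ofNat b * t = ofNat a * s}

end SteinitzNumber

/-! ### Measure algebras -/

/-- A measure algebra: a Boolean algebra (an associative, commutative algebra over `𝔽₂`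
in which every element is idempotent) equipped with a measure `μ` which is positive on
nonzero elements and additive on orthogonal pairs. -/
structure MeasureAlgebra : Type 1 where
  carrier : Type
  [ring : NonUnitalCommRing carrier]
  idem : ∀ x : carrier, x * x = x
  mu : carrier → ℝ
  mu_nonneg : ∀ a, 0 ≤ mu a
  mu_eq_zero_iff : ∀ a, mu a = 0 ↔ a = 0
  mu_add : ∀ a b : carrier, a * b = 0 → mu (a + b) = mu a + mu b

attribute [instance] MeasureAlgebra.ring

namespace MeasureAlgebra

/-- Isomorphism of measure algebras: a Boolean algebra isomorphism preserving the measures. -/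
def Isomorphic (H₁ H₂ : MeasureAlgebra) : Prop :=
  ∃ φ : H₁.carrier ≃+* H₂.carrier, ∀ a, H₂.mu (φ a) = H₁.mu a

/-- Scalar equivalence of measure algebras: a Boolean algebra isomorphism multiplying
the measure by a positive constant `α`. -/
def ScalarEquivalent (H₁ H₂ : MeasureAlgebra) : Prop :=
  ∃ α : ℝ, 0 < α ∧ ∃ φ : H₁.carrier ≃+* H₂.carrier, ∀ a, H₂.mu (φ a) = α * H₁.mu a

/-- The measure subalgebra of a measure algebra supported on a subring, with the
restricted measure. -/
def restrict (H : MeasureAlgebra) (S : NonUnitalSubring H.carrier) : MeasureAlgebra where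
  carrier := S
  idem := fun x => Subtype.ext (H.idem x.1)
  mu := fun x => H.mu x.1
  mu_nonneg := fun a => H.mu_nonneg a.1
  mu_eq_zero_iff := fun a => by
    rw [H.mu_eq_zero_iff a.1]
    exact ⟨fun h => Subtype.ext h, fun h => congrArg Subtype.val h⟩
  mu_add := fun a b hab => H.mu_add a.1 b.1 (congrArg Subtype.val hab)

/-- The standard measure algebra `Stₙ = 𝔽₂ⁿ` with `μ(x₁, …, xₙ) = (x₁ + ⋯ + xₙ)/n`. -/
def St (n : ℕ) : MeasureAlgebra where
  carrier := Fin n → ZMod 2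
  idem := fun x => funext fun i => by
    have h : ∀ a : ZMod 2, a * a = a := by decide
    exact h (x i)
  mu := fun x => (∑ i, ((x i).val : ℝ)) / n
  mu_nonneg := fun a => by positivity
  mu_eq_zero_iff := fun a => by
    constructor
    · intro h
      rcases Nat.eq_zero_or_pos n with hn | hn
      · subst hn; exact funext fun i => i.elim0
      · have hne : ((n : ℝ)) ≠ 0 := by positivity
        have h2 : (∑ i, ((a i).val : ℝ)) = 0 := by
          rcases div_eq_zero_iff.mp h with h' | h'
          · exact h'
          · exact absurd h' hne
        have h3 := (Finset.sum_eq_zero_iff_of_nonneg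
          (fun i _ => by positivity : ∀ i ∈ Finset.univ, (0:ℝ) ≤ ((a i).val : ℝ))).mp h2
        funext i
        have h4 : ((a i).val : ℝ) = 0 := h3 i (Finset.mem_univ i)
        have h5 : (a i).val = 0 := by exact_mod_cast h4
        exact (ZMod.val_eq_zero _).mp h5
    · intro h; subst h; simp
  mu_add := fun a b hab => by
    have key : ∀ u v : ZMod 2, u * v = 0 → (u + v).val = u.val + v.val := by decide
    have h : ∀ i, (((a + b) i).val : ℝ) = ((a i).val : ℝ) + ((b i).val : ℝ) := by
      intro i
      have h0 : a i * b i = 0 := congrFun hab i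
      have h1 := key (a i) (b i) h0
      show (((a i + b i)).val : ℝ) = _
      rw [h1]
      push_cast
      ring
    show (∑ i, (((a + b) i).val : ℝ)) / n
        = (∑ i, ((a i).val : ℝ)) / n + (∑ i, ((b i).val : ℝ)) / n
    rw [← add_div, ← Finset.sum_add_distrib]
    congr 1
    exact Finset.sum_congr rfl fun i _ => h i

/-- A measure algebra is unital if it has an identity element of measure `1`. -/
def Unital (H : MeasureAlgebra) : Prop :=
  ∃ e : H.carrier, (∀ x, e * x = x) ∧ H.mu e = 1

/-- A measure algebra is locally standard if every finite subset is contained in a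
measure subalgebra scalar equivalent to a standard one. -/
def LocallyStandard (H : MeasureAlgebra) : Prop :=
  ∀ t : Finset H.carrier, ∃ (S : NonUnitalSubring H.carrier) (n : ℕ), 0 < n ∧
    (↑t : Set H.carrier) ⊆ S ∧ (H.restrict S).ScalarEquivalent (St n)

/-- For an (idempotent) element `h`, the subring `hH = {x | h·x = x}`. -/
def cornerSubring (H : MeasureAlgebra) (h : H.carrier) : NonUnitalSubring H.carrier where
  carrier := {x | h * x = x}
  zero_mem' := mul_zero h
  add_mem' := by
    intro a b ha hb
    simp only [Set.mem_setOf_eq] at *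
    rw [mul_add, ha, hb]
  neg_mem' := by
    intro a ha
    simp only [Set.mem_setOf_eq] at *
    rw [mul_neg, ha]
  mul_mem' := by
    intro a b ha hb
    simp only [Set.mem_setOf_eq] at *
    rw [← mul_assoc, ha]

/-- The unital measure algebra `H_h = (hH, μ(·)/μ(h))`. -/
def corner (H : MeasureAlgebra) (h : H.carrier) : MeasureAlgebra where
  carrier := H.cornerSubring h
  idem := fun x => Subtype.ext (H.idem x.1)
  mu := fun x => H.mu x.1 / H.mu h
  mu_nonneg := fun a => div_nonneg (H.mu_nonneg a.1) (H.mu_nonneg h)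
  mu_eq_zero_iff := fun a => by
    constructor
    · intro ha
      rcases div_eq_zero_iff.mp ha with h' | h'
      · exact Subtype.ext ((H.mu_eq_zero_iff a.1).mp h')
      · have hh : h = 0 := (H.mu_eq_zero_iff h).mp h'
        have h2 : h * (a : H.carrier) = a := a.2
        apply Subtype.ext
        show (a : H.carrier) = 0
        generalize hx : (a : H.carrier) = x at h2 ⊢
        rw [← h2, hh, zero_mul]
    · intro h'
      subst h'
      have h0 : H.mu ((0 : H.cornerSubring h) : H.carrier) = 0 :=
        (H.mu_eq_zero_iff _).mpr rfl
      show H.mu ((0 : H.cornerSubring h) : H.carrier) / H.mu h = 0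
      rw [h0, zero_div]
  mu_add := fun a b hab => by
    have : H.mu ((a : H.carrier) + b) = H.mu a + H.mu b :=
      H.mu_add a.1 b.1 (congrArg Subtype.val hab)
    show H.mu ((a + b : H.cornerSubring h) : H.carrier) / H.mu h = _
    rw [show ((a + b : H.cornerSubring h) : H.carrier) = (a : H.carrier) + b from rfl,
      this, add_div]

/-- `D(H)`: the set of `n` such that `H` has a subalgebra containing the identity of `H`
and isomorphic to the standard measure algebra `Stₙ`. -/
def D (H : MeasureAlgebra) : Set ℕ :=
  {n | ∃ S : NonUnitalSubring H.carrier,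
    (∃ e ∈ S, ∀ x : H.carrier, e * x = x) ∧ (H.restrict S).Isomorphic (St n)}

/-- The Steinitz number `st(H)` of a (unital locally standard) measure algebra:
the least common multiple of `D(H)`. -/
def st (H : MeasureAlgebra) : SteinitzNumber :=
  fun p => ⨆ n ∈ H.D, (n.factorization p : ℕ∞)

/-- The spectrum of a measure algebra: the set of Steinitz numbers `st(H_h)` for `h ≠ 0`. -/
def Spec (H : MeasureAlgebra) : Set SteinitzNumber :=
  {s | ∃ h : H.carrier, h ≠ 0 ∧ (H.corner h).st = s}

end MeasureAlgebra

/-! A *frame* of `H` is a unital subalgebra with a measure-preserving isomorphism onto some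
`St M`, so `D(H)` is the set of sizes of frames, and by local standardness every finite subset
of `H` lies in a frame. Frames are compared through their atoms: a measure-scaling map
`St m → St N` sends `1` to an element whose support is `m` times the support of the image of an
atom, so `F.S ⊆ G.S` forces `F.M ∣ G.M`. Hence `st(H)` is the lcm of the sizes of the frames
containing a fixed `h`. If `h` covers `a` of the `M` atoms of such a frame, the corner of the
frame at `h` is a frame of `H_h` of size `a`, and these sizes are cofinal in `D(H_h)`. Since
`a / M = μ(h)` does not depend on the frame, `M · st(H_h) = a · st(H)`. Conversely, for
`b ∣ st(H)` pick a frame with `b ∣ M` and let `h` cover `a · M / b` atoms. -/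

attribute [reducible] MeasureAlgebra.St MeasureAlgebra.restrict MeasureAlgebra.corner

lemma Nat.exists_mul_eq_mul_of_dvd {a b n : ℕ} (ha : 0 < a) (hab : a ≤ b) (hbn : b ∣ n)
    (hn : 0 < n) : ∃ k, 0 < k ∧ k ≤ n ∧ a * n = b * k := by
  obtain ⟨c, rfl⟩ := hbn
  refine ⟨a * c, Nat.mul_pos ha (Nat.pos_of_mul_pos_left hn), Nat.mul_le_mul_right c hab, ?_⟩
  ring

lemma eq_of_forall_mul_eq {R : Type*} [NonUnitalCommRing R] {e e' : R}
    (he : ∀ x, e * x = x) (he' : ∀ x, e' * x = x) : e = e' := by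
  rw [← he' e, mul_comm, he]

namespace SteinitzNumber

instance : CommMonoid SteinitzNumber where
  mul := (· * ·)
  one := 1
  mul_assoc s t u := funext fun p => add_assoc (s p) (t p) (u p)
  one_mul s := funext fun p => zero_add (s p)
  mul_one s := funext fun p => add_zero (s p)
  mul_comm s t := funext fun p => add_comm (s p) (t p)

lemma mul_apply (s t : SteinitzNumber) (p : Nat.Primes) : (s * t) p = s p + t p := rfl

lemma ofNat_apply (n : ℕ) (p : Nat.Primes) : ofNat n p = n.factorization p := rfl

lemma ofNat_mul {a b : ℕ} (ha : a ≠ 0) (hb : b ≠ 0) : ofNat (a * b) = ofNat a * ofNat b := by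
  funext p
  simp [mul_apply, ofNat_apply, Nat.factorization_mul ha hb]

lemma ofNat_mul_left_cancel {n : ℕ} {s t : SteinitzNumber} (h : ofNat n * s = ofNat n * t) :
    s = t :=
  funext fun p => WithTop.add_left_cancel (ENat.natCast_ne_top _) (congrFun h p)

lemma eq_of_ofNat_mul_eq {a b c d : ℕ} {s t t' : SteinitzNumber} (ha : a ≠ 0) (hb : b ≠ 0)
    (hc : c ≠ 0) (hd : d ≠ 0) (h : a * d = b * c)
    (ht : ofNat b * t = ofNat a * s) (ht' : ofNat d * t' = ofNat c * s) : t = t' := by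
  apply ofNat_mul_left_cancel (n := b * d)
  calc ofNat (b * d) * t = ofNat d * (ofNat b * t) := by rw [ofNat_mul hb hd]; ac_rfl
    _ = ofNat (a * d) * s := by rw [ht, ofNat_mul ha hd]; ac_rfl
    _ = ofNat b * (ofNat d * t') := by rw [h, ht', ofNat_mul hb hc]; ac_rfl
    _ = ofNat (b * d) * t' := by rw [ofNat_mul hb hd]; ac_rfl

lemma natDvd_ofNat_iff {b n : ℕ} (hn : n ≠ 0) : NatDvd b (ofNat n) ↔ 0 < b ∧ b ∣ n := by
  refine and_congr_right fun hb => ?_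
  rw [← Nat.factorization_prime_le_iff_dvd hb.ne' hn]
  refine ⟨fun h q hq => ?_,
    fun h q => (by exact_mod_cast h q q.2 : (_ : ℕ∞) ≤ n.factorization q)⟩
  have hq' : (b.factorization q : ℕ∞) ≤ n.factorization q := h ⟨q, hq⟩
  exact_mod_cast hq'

def setLcm (A : Set ℕ) : SteinitzNumber := fun p => ⨆ n ∈ A, (n.factorization p : ℕ∞)

lemma setLcm_singleton (n : ℕ) : setLcm {n} = ofNat n :=
  funext fun _ => iSup_singleton

lemma setLcm_range_apply {ι : Type*} (f : ι → ℕ) (p : Nat.Primes) :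
    setLcm (Set.range f) p = ⨆ i, ((f i).factorization p : ℕ∞) :=
  iSup_range

lemma natDvd_setLcm {A : Set ℕ} {n : ℕ} (hn : n ∈ A) (hn0 : 0 < n) : NatDvd n (setLcm A) :=
  ⟨hn0, fun p => le_iSup₂ (f := fun m (_ : m ∈ A) => (m.factorization p : ℕ∞)) n hn⟩

lemma setLcm_eq_of_cofinal {A B : Set ℕ} (hBA : B ⊆ A) (hB : 0 ∉ B)
    (hAB : ∀ a ∈ A, ∃ b ∈ B, a ∣ b) : setLcm A = setLcm B := by
  funext p
  refine le_antisymm (iSup₂_le fun a ha => ?_) (biSup_mono hBA)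
  obtain ⟨b, hb, hab⟩ := hAB a ha
  have hb0 : b ≠ 0 := ne_of_mem_of_not_mem hb hB
  refine le_iSup₂_of_le b hb ?_
  exact_mod_cast (Nat.factorization_le_iff_dvd (ne_zero_of_dvd_ne_zero hb0 hab) hb0).2 hab p

lemma exists_factorization_le_of_natDvd_setLcm {A : Set ℕ} {b q : ℕ}
    (hb : NatDvd b (setLcm A)) (hq : q ∈ b.primeFactors) :
    ∃ n ∈ A, b.factorization q ≤ n.factorization q := by
  have hpos : 0 < b.factorization q :=
    (Nat.prime_of_mem_primeFactors hq).factorization_pos_of_dvd hb.1.ne'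
      (Nat.dvd_of_mem_primeFactors hq)
  have hlt : ((b.factorization q - 1 : ℕ) : ℕ∞) < ⨆ n ∈ A, (n.factorization q : ℕ∞) :=
    lt_of_lt_of_le (by exact_mod_cast Nat.sub_one_lt hpos.ne')
      (hb.2 ⟨q, Nat.prime_of_mem_primeFactors hq⟩)
  obtain ⟨n, hn, hqn⟩ := lt_biSup_iff.1 hlt
  have : b.factorization q - 1 < n.factorization q := by exact_mod_cast hqn
  exact ⟨n, hn, by omega⟩

lemma exists_dvd_of_natDvd_setLcm {A : Set ℕ} (hA : A.Nonempty) (hdir : DirectedOn (· ∣ ·) A)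
    (hA0 : 0 ∉ A) {b : ℕ} (hb : NatDvd b (setLcm A)) : ∃ n ∈ A, b ∣ n := by
  classical
  choose! f hfA hf using fun q => exists_factorization_le_of_natDvd_setLcm (q := q) hb
  have : Nonempty A := hA.to_subtype
  obtain ⟨z, hz⟩ := (directedOn_iff_directed.1 hdir).finset_le
    (b.primeFactors.attach.image fun q : b.primeFactors => (⟨f q, hfA q q.2⟩ : A))
  have hz0 : (z : ℕ) ≠ 0 := ne_of_mem_of_not_mem z.2 hA0
  refine ⟨z, z.2, (Nat.factorization_le_iff_dvd hb.1.ne' hz0).1 ((Finsupp.le_iff _ _).2 ?_)⟩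
  intro q hq
  rw [Nat.support_factorization] at hq
  have hfz : f q ∣ z := hz _ (Finset.mem_image_of_mem _ (Finset.mem_attach _ ⟨q, hq⟩))
  exact (hf q hq).trans
    ((Nat.factorization_le_iff_dvd (ne_zero_of_dvd_ne_zero hz0 hfz) hz0).2 hfz q)

lemma ofNat_mul_setLcm_range {ι : Type*} [Nonempty ι] (a M : ι → ℕ) (ha : ∀ i, a i ≠ 0)
    (hM : ∀ i, M i ≠ 0) (hcross : ∀ i j, a i * M j = a j * M i) (i : ι) :
    ofNat (M i) * setLcm (Set.range a) = ofNat (a i) * setLcm (Set.range M) := by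
  funext p
  rw [mul_apply, mul_apply, setLcm_range_apply, setLcm_range_apply, ENat.add_iSup,
    ENat.add_iSup]
  refine iSup_congr fun j => ?_
  have := congrArg (fun n => n.factorization p) (hcross j i)
  simp only [Nat.factorization_mul (ha _) (hM _), Finsupp.add_apply] at this
  rw [ofNat_apply, ofNat_apply]
  exact_mod_cast (by omega : (M i).factorization p + (a j).factorization p = _)

end SteinitzNumber

open Finset SteinitzNumber

namespace MeasureAlgebra

lemma corner_unital {H : MeasureAlgebra} {h : H.carrier} (hh : h ≠ 0) : (H.corner h).Unital :=
  ⟨⟨h, H.idem h⟩, fun x => Subtype.ext x.2, div_self ((H.mu_eq_zero_iff h).not.2 hh)⟩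

namespace St

variable {n : ℕ}

def supp (x : Fin n → ZMod 2) : Finset (Fin n) := univ.filter fun i => x i ≠ 0

lemma mem_supp {x : Fin n → ZMod 2} {i : Fin n} : i ∈ supp x ↔ x i ≠ 0 := by simp [supp]

lemma card_supp_le (x : Fin n → ZMod 2) : #(supp x) ≤ n :=
  (card_filter_le _ _).trans_eq (card_fin n)

lemma mu_eq (x : Fin n → ZMod 2) : (St n).mu x = #(supp x) / n := by
  have hval : ∀ a : ZMod 2, a.val = if a ≠ 0 then 1 else 0 := by decide
  show (∑ i, ((x i).val : ℝ)) / n = _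
  simp only [hval, Nat.cast_ite, Nat.cast_one, Nat.cast_zero, sum_boole, supp]

lemma supp_one : supp (1 : Fin n → ZMod 2) = univ := by ext; simp [supp]

lemma mu_one (hn : 0 < n) : (St n).mu 1 = 1 := by
  rw [mu_eq, supp_one, card_univ, Fintype.card_fin]
  exact div_self (by positivity)

lemma eq_one_of_forall_mul_eq {u : Fin n → ZMod 2} (hu : ∀ y : Fin n → ZMod 2, u * y = y) :
    u = 1 := by
  simpa using hu 1

lemma unital (hn : 0 < n) : (St n).Unital := ⟨1, one_mul, mu_one hn⟩

lemma dvd_card_supp_of_mu_eq {m N : ℕ} (hm : 0 < m) (hN : 0 < N)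
    (f : (Fin m → ZMod 2) → Fin N → ZMod 2) (c : ℝ)
    (hf : ∀ x, (St N).mu (f x) = c * (St m).mu x) : m ∣ #(supp (f 1)) := by
  -- `f 1` has measure `c` and the image of an atom has measure `c / m`
  set atom : Fin m → ZMod 2 := Pi.single ⟨0, hm⟩ 1
  have hatom : #(supp atom) = 1 :=
    card_eq_one.2 ⟨⟨0, hm⟩, by
      ext j
      by_cases hj : j = ⟨0, hm⟩ <;> simp [atom, mem_supp, hj]⟩
  have h1 := hf 1
  have h2 := hf atom
  rw [mu_one hm, mu_eq] at h1
  rw [mu_eq, mu_eq, hatom] at h2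
  refine ⟨#(supp (f atom)), ?_⟩
  have hN' : (N : ℝ) ≠ 0 := by positivity
  have hm' : (m : ℝ) ≠ 0 := by positivity
  field_simp at h1 h2
  push_cast at h2
  exact_mod_cast (show (#(supp (f 1)) : ℝ) = m * #(supp (f atom)) by linarith)

section Corner

variable {M : ℕ} (x : Fin M → ZMod 2)

def restrictSupp (y : Fin M → ZMod 2) : Fin #(supp x) → ZMod 2 :=
  fun j => y ((supp x).equivFin.symm j)

def extendSupp (w : Fin #(supp x) → ZMod 2) : Fin M → ZMod 2 :=
  fun i => if hi : i ∈ supp x then w ((supp x).equivFin ⟨i, hi⟩) else 0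

variable {x}

lemma apply_eq_zero_of_mul_eq {y : Fin M → ZMod 2} (hy : x * y = y) {i : Fin M}
    (hi : i ∉ supp x) : y i = 0 := by
  rw [← hy, Pi.mul_apply, not_ne_iff.1 (mem_supp.not.1 hi), zero_mul]

lemma restrictSupp_injOn {y z : Fin M → ZMod 2} (hy : x * y = y) (hz : x * z = z)
    (h : restrictSupp x y = restrictSupp x z) : y = z := by
  funext i
  by_cases hi : i ∈ supp x
  · simpa [restrictSupp] using congrFun h ((supp x).equivFin ⟨i, hi⟩)
  · rw [apply_eq_zero_of_mul_eq hy hi, apply_eq_zero_of_mul_eq hz hi]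

lemma restrictSupp_extendSupp (w : Fin #(supp x) → ZMod 2) :
    restrictSupp x (extendSupp x w) = w := by
  funext j
  simp [restrictSupp, extendSupp]

lemma mul_extendSupp (w : Fin #(supp x) → ZMod 2) : x * extendSupp x w = extendSupp x w := by
  have hunit : ∀ a b : ZMod 2, a ≠ 0 → a * b = b := by decide
  funext i
  by_cases hi : i ∈ supp x
  · exact hunit _ _ (mem_supp.1 hi)
  · simp [extendSupp, hi]

lemma card_supp_restrictSupp {y : Fin M → ZMod 2} (hy : x * y = y) :
    #(supp (restrictSupp x y)) = #(supp y) := by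
  refine card_bij (fun j _ => ((supp x).equivFin.symm j).1) (fun j hj => ?_)
    (fun j _ j' _ h => (supp x).equivFin.symm.injective (Subtype.ext h)) (fun i hi => ?_)
  · exact mem_supp.2 (mem_supp.1 hj :)
  · have hix : i ∈ supp x := by
      by_contra hix
      exact mem_supp.1 hi (apply_eq_zero_of_mul_eq hy hix)
    refine ⟨(supp x).equivFin ⟨i, hix⟩, mem_supp.2 ?_, by simp⟩
    simpa [restrictSupp] using mem_supp.1 hi

end Corner

end St

lemma equiv_St_apply_unit {H : MeasureAlgebra} {S : NonUnitalSubring H.carrier} {M : ℕ}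
    (φ : (H.restrict S).carrier ≃+* (St M).carrier) {e : H.carrier} (heS : e ∈ S)
    (he : ∀ x, e * x = x) : φ ⟨e, heS⟩ = 1 :=
  St.eq_one_of_forall_mul_eq fun y => by
    obtain ⟨z, rfl⟩ := φ.surjective y
    rw [← map_mul]
    exact congrArg φ (Subtype.ext (he z.1))

structure StdFrame (H : MeasureAlgebra) where
  S : NonUnitalSubring H.carrier
  M : ℕ
  φ : (H.restrict S).carrier ≃+* (St M).carrier
  mu_φ : ∀ z, (St M).mu (φ z) = H.mu z.1
  exists_unit_mem : ∃ e ∈ S, ∀ x, e * x = x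

namespace StdFrame

variable {H : MeasureAlgebra}

lemma exists_of_mem_D {n : ℕ} (hn : n ∈ H.D) : ∃ F : StdFrame H, F.M = n := by
  obtain ⟨S, he, φ, hφ⟩ := hn
  exact ⟨⟨S, n, φ, hφ, he⟩, rfl⟩

variable (F : StdFrame H)

lemma M_mem_D : F.M ∈ H.D := ⟨F.S, F.exists_unit_mem, F.φ, F.mu_φ⟩

lemma unit_mem {e : H.carrier} (he : ∀ x, e * x = x) : e ∈ F.S := by
  obtain ⟨e', he'S, he'⟩ := F.exists_unit_mem
  rwa [eq_of_forall_mul_eq he he']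

lemma φ_unit {e : H.carrier} (he : ∀ x, e * x = x) : F.φ ⟨e, F.unit_mem he⟩ = 1 :=
  equiv_St_apply_unit F.φ _ he

lemma M_pos (hu : H.Unital) : 0 < F.M := by
  obtain ⟨e, he, hμ⟩ := hu
  have h1 : (St F.M).mu (F.φ ⟨e, F.unit_mem he⟩) = 1 := (F.mu_φ _).trans hμ
  rw [St.mu_eq] at h1
  by_contra h0
  rw [Nat.cast_eq_zero.2 (Nat.eq_zero_of_not_pos h0), div_zero] at h1
  exact zero_ne_one h1

lemma finite : (F.S : Set H.carrier).Finite :=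
  have : Finite F.S := Finite.of_equiv _ F.φ.toEquiv.symm
  Set.toFinite _

lemma exists_superset (hu : H.Unital) (hls : H.LocallyStandard) {t : Set H.carrier}
    (ht : t.Finite) : ∃ F : StdFrame H, t ⊆ F.S := by
  classical
  obtain ⟨e, he, hμ⟩ := hu
  obtain ⟨S, M, hM, hsub, α, -, φ, hφ⟩ := hls (insert e ht.toFinset)
  have heS : e ∈ S := hsub (by simp)
  -- the scaling factor is `1`, as both identities have measure `1`
  have hα : α = 1 := by
    have h1 := hφ ⟨e, heS⟩
    rw [equiv_St_apply_unit φ heS he, St.mu_one hM] at h1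
    change 1 = α * H.mu e at h1
    rw [hμ, mul_one] at h1
    exact h1.symm
  refine ⟨⟨S, M, φ, fun z => ?_, e, heS, he⟩, fun x hx => hsub (by simp [hx])⟩
  rw [hφ, hα, one_mul]

def count {h : H.carrier} (hh : h ∈ F.S) : ℕ := #(St.supp (F.φ ⟨h, hh⟩))

variable {h : H.carrier} (hh : h ∈ F.S)

lemma mu_eq_count_div : H.mu h = F.count hh / F.M := (F.mu_φ ⟨h, hh⟩).symm.trans (St.mu_eq _)

lemma count_le : F.count hh ≤ F.M := St.card_supp_le _

lemma count_eq_zero_iff : F.count hh = 0 ↔ h = 0 := by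
  rw [← H.mu_eq_zero_iff, F.mu_eq_count_div hh, div_eq_zero_iff, Nat.cast_eq_zero,
    Nat.cast_eq_zero]
  exact ⟨Or.inl, fun h0 => h0.elim id fun hM => Nat.eq_zero_of_le_zero (hM ▸ F.count_le hh)⟩

lemma count_pos (hh0 : h ≠ 0) : 0 < F.count hh :=
  Nat.pos_of_ne_zero ((F.count_eq_zero_iff hh).not.2 hh0)

lemma count_mul_M (hu : H.Unital) (G : StdFrame H) (hG : h ∈ G.S) :
    F.count hh * G.M = G.count hG * F.M := by
  have h1 := (F.mu_eq_count_div hh).symm.trans (G.mu_eq_count_div hG)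
  have := F.M_pos hu
  have := G.M_pos hu
  rw [div_eq_div_iff (by positivity) (by positivity)] at h1
  exact_mod_cast h1

lemma exists_count_eq {k : ℕ} (hk : k ≤ F.M) : ∃ h, ∃ hh : h ∈ F.S, F.count hh = k := by
  obtain ⟨A, -, hA⟩ :=
    exists_subset_card_eq (s := (univ : Finset (Fin F.M))) (by simpa using hk)
  let y : Fin F.M → ZMod 2 := fun i => if i ∈ A then 1 else 0
  refine ⟨(F.φ.symm y).1, (F.φ.symm y).2, ?_⟩
  rw [count, ← hA, Subtype.coe_eta, RingEquiv.apply_symm_apply]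
  congr 1
  ext i
  simp [St.mem_supp, y]

lemma dvd_card_supp_of_map {K : MeasureAlgebra} (hK : K.Unital) (hu : H.Unital)
    (T : StdFrame K) (G : StdFrame H) (j : K.carrier → H.carrier) (c : ℝ)
    (hj : ∀ x, H.mu (j x) = c * K.mu x) (hmaps : ∀ x ∈ T.S, j x ∈ G.S) {e : K.carrier}
    (he : ∀ x, e * x = x) : T.M ∣ #(St.supp (G.φ ⟨j e, hmaps e (T.unit_mem he)⟩)) := by
  have hdvd := St.dvd_card_supp_of_mu_eq (T.M_pos hK) (G.M_pos hu)
    (fun y => G.φ ⟨j (T.φ.symm y).1, hmaps _ (T.φ.symm y).2⟩) c fun y => by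
      rw [G.mu_φ, hj, ← T.mu_φ, RingEquiv.apply_symm_apply]
  have h1 : T.φ.symm 1 = ⟨e, T.unit_mem he⟩ := by rw [RingEquiv.symm_apply_eq, T.φ_unit he]
  simpa only [h1] using hdvd

lemma M_dvd_M_of_le (hu : H.Unital) {F G : StdFrame H} (hFG : F.S ≤ G.S) : F.M ∣ G.M := by
  obtain ⟨e, he, -⟩ := id hu
  have hdvd := dvd_card_supp_of_map hu hu F G id 1 (by simp) (fun x hx => hFG hx) he
  have h1 : G.φ ⟨id e, hFG (F.unit_mem he)⟩ = 1 := G.φ_unit he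
  rwa [h1, St.supp_one, card_univ, Fintype.card_fin] at hdvd

section Corner

variable {h : H.carrier} (hh : h ∈ F.S)

abbrev cornerS : NonUnitalSubring (H.corner h).carrier :=
  F.S.comap (NonUnitalSubringClass.subtype (H.cornerSubring h))

variable {F}

lemma mul_φ_corner (z : F.cornerS (h := h)) :
    F.φ ⟨h, hh⟩ * F.φ ⟨z.1.1, z.2⟩ = F.φ ⟨z.1.1, z.2⟩ := by
  rw [← map_mul]
  exact congrArg F.φ (Subtype.ext z.1.2)

def cornerHom : ((H.corner h).restrict F.cornerS).carrier →ₙ+* (St (F.count hh)).carrier where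
  toFun z := St.restrictSupp (F.φ ⟨h, hh⟩) (F.φ ⟨z.1.1, z.2⟩)
  map_mul' z z' := by
    show _ = St.restrictSupp _ (F.φ ⟨z.1.1, z.2⟩ * F.φ ⟨z'.1.1, z'.2⟩)
    rw [← map_mul]
    rfl
  map_zero' := by
    show St.restrictSupp _ (F.φ 0) = 0
    rw [map_zero]
    rfl
  map_add' z z' := by
    show _ = St.restrictSupp _ (F.φ ⟨z.1.1, z.2⟩ + F.φ ⟨z'.1.1, z'.2⟩)
    rw [← map_add]
    rfl

lemma cornerHom_bijective : Function.Bijective (cornerHom hh) := by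
  refine ⟨fun z z' hzz' => ?_, fun w => ?_⟩
  · have := F.φ.injective (St.restrictSupp_injOn (mul_φ_corner hh z) (mul_φ_corner hh z') hzz')
    exact Subtype.ext (Subtype.ext (congrArg Subtype.val this :))
  · set u := F.φ.symm (St.extendSupp (F.φ ⟨h, hh⟩) w)
    have hu : h * u.1 = u.1 := by
      have : (⟨h, hh⟩ * u : F.S) = u := F.φ.injective (by
        rw [map_mul, RingEquiv.apply_symm_apply]
        exact St.mul_extendSupp _)
      exact congrArg Subtype.val this
    refine ⟨⟨⟨u.1, hu⟩, u.2⟩, ?_⟩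
    show St.restrictSupp _ (F.φ u) = w
    rw [RingEquiv.apply_symm_apply]
    exact St.restrictSupp_extendSupp _

variable (F)

def corner : StdFrame (H.corner h) where
  S := F.cornerS
  M := F.count hh
  φ := RingEquiv.ofBijective (cornerHom hh) (cornerHom_bijective hh)
  mu_φ z := by
    show (St _).mu (St.restrictSupp _ (F.φ ⟨z.1.1, z.2⟩)) = H.mu z.1.1 / H.mu h
    rw [St.mu_eq, St.card_supp_restrictSupp (mul_φ_corner hh z), ← F.mu_φ ⟨z.1.1, z.2⟩,
      St.mu_eq, F.mu_eq_count_div hh]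
    obtain hM | hM := F.M.eq_zero_or_pos
    · have h0 : #(St.supp (F.φ ⟨z.1.1, z.2⟩)) = 0 :=
        Nat.eq_zero_of_le_zero ((St.card_supp_le _).trans_eq hM)
      simp [h0]
    · rw [div_div_div_cancel_right₀ (by positivity)]
      rfl
  exists_unit_mem := ⟨⟨h, H.idem h⟩, hh, fun x => Subtype.ext x.2⟩

lemma count_mem_D_corner : F.count hh ∈ (H.corner h).D :=
  (F.corner hh).M_mem_D

end Corner

end StdFrame

variable {H : MeasureAlgebra}

lemma exists_dvd_count_of_mem_D_corner (hu : H.Unital) (hls : H.LocallyStandard) {h : H.carrier}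
    (hh0 : h ≠ 0) {m : ℕ} (hm : m ∈ (H.corner h).D) :
    ∃ G : StdFrame H, ∃ hG : h ∈ G.S, m ∣ G.count hG := by
  obtain ⟨T, rfl⟩ := StdFrame.exists_of_mem_D hm
  obtain ⟨G, hG⟩ := StdFrame.exists_superset hu hls ((T.finite.image Subtype.val).insert h)
  have hμ : H.mu h ≠ 0 := (H.mu_eq_zero_iff h).not.2 hh0
  exact ⟨G, hG (Set.mem_insert _ _), T.dvd_card_supp_of_map (corner_unital hh0) hu G
    Subtype.val (H.mu h) (fun x => (mul_div_cancel₀ _ hμ).symm)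
    (fun x hx => hG (Set.mem_insert_of_mem _ ⟨x, hx, rfl⟩)) (e := ⟨h, H.idem h⟩)
    fun x => Subtype.ext x.2⟩

lemma zero_notMem_D (hu : H.Unital) : 0 ∉ H.D := fun h0 => by
  obtain ⟨F, hF⟩ := StdFrame.exists_of_mem_D h0
  exact (F.M_pos hu).ne' hF

lemma D_nonempty (hu : H.Unital) (hls : H.LocallyStandard) : H.D.Nonempty :=
  let ⟨F, _⟩ := StdFrame.exists_superset hu hls Set.finite_empty
  ⟨F.M, F.M_mem_D⟩

lemma directedOn_D (hu : H.Unital) (hls : H.LocallyStandard) : DirectedOn (· ∣ ·) H.D := by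
  intro a ha b hb
  obtain ⟨F, rfl⟩ := StdFrame.exists_of_mem_D ha
  obtain ⟨G, rfl⟩ := StdFrame.exists_of_mem_D hb
  obtain ⟨K, hK⟩ := StdFrame.exists_superset hu hls (F.finite.union G.finite)
  exact ⟨K.M, K.M_mem_D, StdFrame.M_dvd_M_of_le hu fun x hx => hK (Or.inl hx),
    StdFrame.M_dvd_M_of_le hu fun x hx => hK (Or.inr hx)⟩

lemma st_eq_setLcm_M (hu : H.Unital) (hls : H.LocallyStandard) (h : H.carrier) :
    H.st = setLcm (Set.range fun F : {F : StdFrame H // h ∈ F.S} => F.1.M) := by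
  refine setLcm_eq_of_cofinal (Set.range_subset_iff.2 fun F => F.1.M_mem_D)
    (fun ⟨F, hF⟩ => (F.1.M_pos hu).ne' hF) fun N hN => ?_
  obtain ⟨F, rfl⟩ := StdFrame.exists_of_mem_D hN
  obtain ⟨G, hG⟩ := StdFrame.exists_superset hu hls (F.finite.insert h)
  exact ⟨G.M, ⟨⟨G, hG (Set.mem_insert _ _)⟩, rfl⟩,
    StdFrame.M_dvd_M_of_le hu fun x hx => hG (Set.mem_insert_of_mem _ hx)⟩

lemma st_corner_eq_setLcm_count (hu : H.Unital) (hls : H.LocallyStandard) {h : H.carrier}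
    (hh0 : h ≠ 0) :
    (H.corner h).st =
      setLcm (Set.range fun F : {F : StdFrame H // h ∈ F.S} => F.1.count F.2) := by
  refine setLcm_eq_of_cofinal (Set.range_subset_iff.2 fun F => F.1.count_mem_D_corner F.2)
    (fun ⟨F, hF⟩ => (F.1.count_pos F.2 hh0).ne' hF) fun m hm => ?_
  obtain ⟨G, hG, hdvd⟩ := exists_dvd_count_of_mem_D_corner hu hls hh0 hm
  exact ⟨_, ⟨⟨G, hG⟩, rfl⟩, hdvd⟩

theorem ofNat_M_mul_st_corner (hu : H.Unital) (hls : H.LocallyStandard) (F : StdFrame H)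
    {h : H.carrier} (hh : h ∈ F.S) (hh0 : h ≠ 0) :
    ofNat F.M * (H.corner h).st = ofNat (F.count hh) * H.st := by
  have : Nonempty {F : StdFrame H // h ∈ F.S} := ⟨⟨F, hh⟩⟩
  rw [st_corner_eq_setLcm_count hu hls hh0, st_eq_setLcm_M hu hls h]
  exact ofNat_mul_setLcm_range (ι := {G : StdFrame H // h ∈ G.S}) (fun G => G.1.count G.2)
    (fun G => G.1.M) (fun G => (G.1.count_pos G.2 hh0).ne') (fun G => (G.1.M_pos hu).ne')
    (fun G G' => G.1.count_mul_M G.2 hu G'.1 G'.2) ⟨F, hh⟩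

theorem spec_eq (hu : H.Unital) (hls : H.LocallyStandard) :
    H.Spec =
      {t | ∃ a b : ℕ, 0 < a ∧ a ≤ b ∧ NatDvd b H.st ∧ ofNat b * t = ofNat a * H.st} := by
  ext t
  constructor
  · rintro ⟨h, hh0, rfl⟩
    obtain ⟨F, hF⟩ := StdFrame.exists_superset hu hls (Set.finite_singleton h)
    have hh : h ∈ F.S := hF rfl
    exact ⟨F.count hh, F.M, F.count_pos hh hh0, F.count_le hh,
      natDvd_setLcm F.M_mem_D (F.M_pos hu), ofNat_M_mul_st_corner hu hls F hh hh0⟩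
  · rintro ⟨a, b, ha, hab, hb, ht⟩
    obtain ⟨N, hN, hbN⟩ := exists_dvd_of_natDvd_setLcm (D_nonempty hu hls) (directedOn_D hu hls)
      (zero_notMem_D hu) hb
    obtain ⟨F, rfl⟩ := StdFrame.exists_of_mem_D hN
    have hM := F.M_pos hu
    obtain ⟨k, hk0, hkM, hk⟩ := Nat.exists_mul_eq_mul_of_dvd ha hab hbN hM
    obtain ⟨h, hh, rfl⟩ := F.exists_count_eq hkM
    have hh0 : h ≠ 0 := (F.count_eq_zero_iff hh).not.1 hk0.ne'
    exact ⟨h, hh0, (eq_of_ofNat_mul_eq ha.ne' hb.1.ne' hk0.ne' hM.ne' hk ht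
      (ofNat_M_mul_st_corner hu hls F hh hh0)).symm⟩

namespace St

variable {n : ℕ}

lemma locallyStandard (hn : 0 < n) : (St n).LocallyStandard := fun _ =>
  ⟨⊤, n, hn, fun x _ => NonUnitalSubring.mem_top x, 1, one_pos, NonUnitalSubring.topEquiv,
    fun _ => (one_mul _).symm⟩

def topFrame (n : ℕ) : StdFrame (St n) :=
  ⟨⊤, n, NonUnitalSubring.topEquiv, fun _ => rfl, 1, NonUnitalSubring.mem_top _, one_mul⟩

lemma st_eq (hn : 0 < n) : (St n).st = ofNat n := by
  rw [← setLcm_singleton]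
  refine setLcm_eq_of_cofinal (Set.singleton_subset_iff.2 (topFrame n).M_mem_D)
    (by simpa using hn.ne) fun m hm => ?_
  obtain ⟨F, rfl⟩ := StdFrame.exists_of_mem_D hm
  exact ⟨n, rfl, StdFrame.M_dvd_M_of_le (unital hn) (G := topFrame n) le_top⟩

theorem spec_eq (hn : 0 < n) :
    (St n).Spec = {t | ∃ k : ℕ, 1 ≤ k ∧ k ≤ n ∧ t = ofNat k} := by
  rw [MeasureAlgebra.spec_eq (unital hn) (locallyStandard hn), st_eq hn]
  ext t
  constructor
  · rintro ⟨a, b, ha, hab, hb, ht⟩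
    obtain ⟨k, hk0, hkn, hk⟩ :=
      Nat.exists_mul_eq_mul_of_dvd ha hab ((natDvd_ofNat_iff hn.ne').1 hb).2 hn
    exact ⟨k, hk0, hkn, eq_of_ofNat_mul_eq ha.ne' hb.1.ne' hk0.ne' hn.ne' hk ht (mul_comm _ _)⟩
  · rintro ⟨k, hk, hkn, rfl⟩
    exact ⟨k, n, hk, hkn, (natDvd_ofNat_iff hn.ne').2 ⟨hn, dvd_rfl⟩, mul_comm _ _⟩

end St

end MeasureAlgebra

/-- Let `H` be a unital locally standard measure algebra with `st(H) = s`. Then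
`Spec(H) = { (a/b)·s : b ∈ Ω(s), 1 ≤ a ≤ b }`. In particular,
`Spec(Stₙ) = {1, 2, …, n}`. -/
theorem spec_of_unital
    (H : MeasureAlgebra) (hu : H.Unital) (hls : H.LocallyStandard)
    (s : SteinitzNumber) (hs : H.st = s) :
    H.Spec = {t | ∃ a b : ℕ, 0 < a ∧ a ≤ b ∧ SteinitzNumber.NatDvd b s ∧
        SteinitzNumber.ofNat b * t = SteinitzNumber.ofNat a * s} ∧
    (∀ n : ℕ, 0 < n →
      (MeasureAlgebra.St n).Spec = {t | ∃ k : ℕ, 1 ≤ k ∧ k ≤ n ∧ t = SteinitzNumber.ofNat k}) := by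
  subst hs
  exact ⟨MeasureAlgebra.spec_eq hu hls, fun _ => MeasureAlgebra.St.spec_eq⟩
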